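/- Let G be a (2 × 2)-game and set Y₁ = X¹ 1 1 − X¹ 2 1, Y₂ = X¹ 1 2 − X¹ 2 2, Z₁ = X² 1 1 − X² 1 2, Z₂ = X² 2 1 − X² 2 2, and assume Y₁, Y₂, Z₁, Z₂ are all nonzero. If the correlated equilibrium polytope P_G has maximal dimension 3 (the dimension of the direction of its affine span equals 3), then P_G has exactly 5 extreme points. -/

import Mathlib

/-- The correlated equilibrium polytope of a `(2 × 2)`-game. -/
def CorrelatedEqPolytope (X1 X2 : Fin 2 → Fin 2 → ℝ) :
    Set (Fin 2 → Fin 2 → ℝ) :=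
  {p | (∀ j k, 0 ≤ p j k) ∧ (∑ j, ∑ k, p j k = 1) ∧
    (∀ k l : Fin 2, 0 ≤ ∑ j, (X1 k j - X1 l j) * p k j) ∧
    (∀ k l : Fin 2, 0 ≤ ∑ i, (X2 i k - X2 i l) * p i k)}

/-!
Write `A, B, C, D` for the forms `Y₁p₀₀ + Y₂p₀₁`, `Y₁p₁₀ + Y₂p₁₁`, `Z₁p₀₀ + Z₂p₁₀`, `Z₁p₀₁ + Z₂p₁₁`,
so that `P_G` is cut out of the simplex by `A ≥ 0`, `B ≤ 0`, `C ≥ 0`, `D ≤ 0`. If one of these forms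
vanished on all of `P_G`, then `P_G` would lie in two independent hyperplanes and have dimension at
most 2. So each form is nonzero somewhere on `P_G`, which forces `Y₁, Y₂` to have opposite signs,
likewise `Z₁, Z₂`, and the identity `Z₁A + Z₂B = Y₁C + Y₂D` rules out `Y₁, Z₁` of opposite signs.
Up to swapping the columns, `Y₁, Z₁ > 0 > Y₂, Z₂`. Then `P_G` is the bipyramid whose apexes are the
two pure equilibria and whose base is the triangle spanned by the mixed Nash equilibrium and the two
points where `p₀₁ = 0`, resp. `p₁₀ = 0`, and two incentive constraints are tight. Each of these five
points is exposed by the sum of the constraints tight at it, and every point of `P_G` is a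
nonnegative combination of the vertices of one of the two tetrahedra into which the plane through
the apexes and the Nash equilibrium cuts the bipyramid.
-/

open Set Module

section General

variable {E : Type*} [AddCommGroup E] [Module ℝ E]

lemma vectorSpan_le_ker_of_forall_eq {S : Set E} (f : E →ₗ[ℝ] ℝ) {a : ℝ}
    (hf : ∀ p ∈ S, f p = a) : vectorSpan ℝ S ≤ LinearMap.ker f := by
  rw [vectorSpan_def, Submodule.span_le]
  rintro _ ⟨x, hx, y, hy, rfl⟩
  simp [hf x hx, hf y hy]

lemma finrank_direction_add_two_le [FiniteDimensional ℝ E] {S : Set E} (f g : E →ₗ[ℝ] ℝ)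
    {a b : ℝ} (hf : ∀ p ∈ S, f p = a) (hg : ∀ p ∈ S, g p = b) {u v : E} (hu : f u ≠ 0)
    (hv : f v = 0) (hgv : g v ≠ 0) :
    finrank ℝ (affineSpan ℝ S).direction + 2 ≤ finrank ℝ E := by
  have hS : vectorSpan ℝ S ≤ LinearMap.ker f ⊓ LinearMap.ker g :=
    le_inf (vectorSpan_le_ker_of_forall_eq f hf) (vectorSpan_le_ker_of_forall_eq g hg)
  have h₁ : LinearMap.ker f ⊓ LinearMap.ker g < LinearMap.ker f :=
    SetLike.lt_iff_le_and_exists.2 ⟨inf_le_left, v, hv, fun h => hgv h.2⟩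
  have h₂ : LinearMap.ker f ≠ ⊤ := fun h => hu (h ▸ Submodule.mem_top : u ∈ LinearMap.ker f)
  rw [direction_affineSpan]
  have := Submodule.finrank_mono hS
  have := Submodule.finrank_lt_finrank_of_lt h₁
  have := Submodule.finrank_lt h₂
  omega

lemma mem_extremePoints_of_unique_zero {S : Set E} {x : E} (g : E →ₗ[ℝ] ℝ) (hx : x ∈ S)
    (hg : ∀ y ∈ S, 0 ≤ g y) (hgx : g x = 0) (huniq : ∀ y ∈ S, g y = 0 → y = x) :
    x ∈ S.extremePoints ℝ := by
  refine mem_extremePoints_iff_left.2 ⟨hx, fun y hy z hz ⟨s, t, hs, ht, _, hyz⟩ => huniq y hy ?_⟩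
  have : s * g y + t * g z = 0 := by simpa [hgx] using congrArg g hyz
  nlinarith [hg y hy, hg z hz, mul_nonneg hs.le (hg y hy), mul_nonneg ht.le (hg z hz)]

noncomputable def rayPoint (φ : E →ₗ[ℝ] ℝ) (r : E) : E := (φ r)⁻¹ • r

lemma eq_rayPoint_of_smul_eq {φ : E →ₗ[ℝ] ℝ} {y r : E} {k m : ℝ} (hy : φ y = 1) (hk : k ≠ 0)
    (h : k • y = m • r) : y = rayPoint φ r := by
  have hkm : k = m * φ r := by simpa [hy] using congrArg φ h
  have hm : m ≠ 0 := by rintro rfl; simp_all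
  have hr : φ r ≠ 0 := by rintro h'; simp_all
  rw [rayPoint, ← smul_right_injective E hk |>.eq_iff, h, smul_smul, hkm]
  field_simp

lemma mem_convexHull_of_smul_eq_sum {ι : Type*} {φ : E →ₗ[ℝ] ℝ} {T : Set E} {s : Finset ι}
    {w : ι → ℝ} {r : ι → E} {t : ℝ} {p : E} (ht : 0 < t) (hp : φ p = 1)
    (hw : ∀ i ∈ s, 0 ≤ w i) (hr : ∀ i ∈ s, 0 < φ (r i)) (hT : ∀ i ∈ s, rayPoint φ (r i) ∈ T)
    (h : t • p = ∑ i ∈ s, w i • r i) : p ∈ convexHull ℝ T := by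
  have hp' : p = ∑ i ∈ s, (t⁻¹ * w i * φ (r i)) • rayPoint φ (r i) := by
    rw [← inv_smul_smul₀ ht.ne' p, h, Finset.smul_sum]
    refine Finset.sum_congr rfl fun i hi => ?_
    rw [rayPoint, smul_smul, smul_smul]
    congr 1
    field_simp [(hr i hi).ne']
  rw [hp']
  refine (convex_convexHull ℝ T).sum_mem (fun i hi => ?_) ?_
    (fun i hi => subset_convexHull ℝ T (hT i hi))
  · have := hw i hi; have := hr i hi; positivity
  · have := congrArg φ h
    simp only [map_smul, map_sum, smul_eq_mul, hp, mul_one] at this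
    simp_rw [mul_assoc, ← Finset.mul_sum, ← this]
    exact inv_mul_cancel₀ ht.ne'


lemma rayPoint_mem_extremePoints {S : Set E} {φ g : E →ₗ[ℝ] ℝ} {r : E} (hmem : rayPoint φ r ∈ S)
    (hS : ∀ y ∈ S, φ y = 1) (hg : ∀ y ∈ S, 0 ≤ g y) (hgr : g r = 0)
    (huniq : ∀ y ∈ S, g y = 0 → ∃ k m : ℝ, k ≠ 0 ∧ k • y = m • r) :
    rayPoint φ r ∈ S.extremePoints ℝ :=
  mem_extremePoints_of_unique_zero g hmem hg (by simp [rayPoint, hgr]) fun y hy hy0 =>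
    let ⟨_, _, hk, h⟩ := huniq y hy hy0
    eq_rayPoint_of_smul_eq (hS y hy) hk h

end General

section Pairing

variable {ι κ : Type*} [Fintype ι] [Fintype κ]

def pairing (c : ι → κ → ℝ) : (ι → κ → ℝ) →ₗ[ℝ] ℝ where
  toFun p := ∑ i, ∑ j, c i j * p i j
  map_add' p q := by simp only [Pi.add_apply, mul_add, Finset.sum_add_distrib]
  map_smul' t p := by
    simp only [Pi.smul_apply, smul_eq_mul, Finset.mul_sum, RingHom.id_apply, mul_left_comm]

@[simp] lemma pairing_apply (c p : ι → κ → ℝ) : pairing c p = ∑ i, ∑ j, c i j * p i j := rfl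

lemma rayPoint_ne_rayPoint_of_apply {r s : ι → κ → ℝ} (i : ι) (j : κ) (hr : r i j = 0)
    (hs : s i j ≠ 0) (hs' : pairing 1 s ≠ 0) :
    rayPoint (pairing 1) r ≠ rayPoint (pairing 1) s := fun h => by
  have := congrFun (congrFun h i) j
  simp only [rayPoint, Pi.smul_apply, smul_eq_mul, hr, mul_zero] at this
  exact mul_ne_zero (inv_ne_zero hs') hs this.symm

end Pairing

lemma pairing_fin_two_apply (c p : Fin 2 → Fin 2 → ℝ) :
    pairing c p = c 0 0 * p 0 0 + c 0 1 * p 0 1 + c 1 0 * p 1 0 + c 1 1 * p 1 1 := by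
  simp only [pairing_apply, Fin.sum_univ_two, add_assoc]

def payoffDiffPolytope (Y₁ Y₂ Z₁ Z₂ : ℝ) : Set (Fin 2 → Fin 2 → ℝ) :=
  {p | (∀ i j, 0 ≤ p i j) ∧ pairing 1 p = 1 ∧
    0 ≤ Y₁ * p 0 0 + Y₂ * p 0 1 ∧ Y₁ * p 1 0 + Y₂ * p 1 1 ≤ 0 ∧
    0 ≤ Z₁ * p 0 0 + Z₂ * p 1 0 ∧ Z₁ * p 0 1 + Z₂ * p 1 1 ≤ 0}

lemma correlatedEqPolytope_eq_payoffDiffPolytope (X1 X2 : Fin 2 → Fin 2 → ℝ) :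
    CorrelatedEqPolytope X1 X2 = payoffDiffPolytope (X1 0 0 - X1 1 0) (X1 0 1 - X1 1 1)
      (X2 0 0 - X2 0 1) (X2 1 0 - X2 1 1) := by
  ext p
  simp only [CorrelatedEqPolytope, payoffDiffPolytope, mem_ofPred_eq, pairing_apply, Pi.one_apply,
    one_mul, Fin.forall_fin_two, Fin.sum_univ_two, sub_self, zero_mul, add_zero, le_refl,
    true_and, and_true]
  refine and_congr_right fun _ => and_congr_right fun _ => ⟨?_, ?_⟩
  · rintro ⟨⟨hA, hB⟩, hC, hD⟩
    exact ⟨hA, by linarith, hC, by linarith⟩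
  · rintro ⟨hA, hB, hC, hD⟩
    exact ⟨⟨hA, by linarith⟩, hC, by linarith⟩

lemma convex_payoffDiffPolytope (Y₁ Y₂ Z₁ Z₂ : ℝ) : Convex ℝ (payoffDiffPolytope Y₁ Y₂ Z₁ Z₂) := by
  rintro x ⟨hx0, hx1, hxA, hxB, hxC, hxD⟩ y ⟨hy0, hy1, hyA, hyB, hyC, hyD⟩ s t hs ht hst
  refine ⟨fun i j => ?_, ?_, ?_, ?_, ?_, ?_⟩
  all_goals simp only [map_add, map_smul, Pi.add_apply, Pi.smul_apply, smul_eq_mul, hx1, hy1]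
  · have := hx0 i j; have := hy0 i j; positivity
  · linarith
  all_goals nlinarith [mul_nonneg hs hxA, mul_nonneg ht hyA, mul_nonneg hs hxC, mul_nonneg ht hyC,
    mul_nonpos_iff.2 (Or.inl ⟨hs, hxB⟩), mul_nonpos_iff.2 (Or.inl ⟨ht, hyB⟩),
    mul_nonpos_iff.2 (Or.inl ⟨hs, hxD⟩), mul_nonpos_iff.2 (Or.inl ⟨ht, hyD⟩)]

noncomputable def colSwap : (Fin 2 → Fin 2 → ℝ) ≃ₗ[ℝ] (Fin 2 → Fin 2 → ℝ) :=
  LinearEquiv.piCongrRight fun _ => LinearEquiv.funCongrLeft ℝ ℝ (Equiv.swap 0 1)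

@[simp] lemma colSwap_apply (p : Fin 2 → Fin 2 → ℝ) (i j : Fin 2) :
    colSwap p i j = p i (Equiv.swap 0 1 j) := rfl

lemma colSwap_image_payoffDiffPolytope (Y₁ Y₂ Z₁ Z₂ : ℝ) :
    colSwap '' payoffDiffPolytope Y₁ Y₂ Z₁ Z₂ = payoffDiffPolytope Y₂ Y₁ (-Z₁) (-Z₂) := by
  have hinv : ∀ p, colSwap (colSwap p) = p := fun p => by
    ext i j; fin_cases j <;> simp
  have hmem : ∀ p, colSwap p ∈ payoffDiffPolytope Y₂ Y₁ (-Z₁) (-Z₂) ↔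
      p ∈ payoffDiffPolytope Y₁ Y₂ Z₁ Z₂ := by
    intro p
    simp only [payoffDiffPolytope, mem_ofPred_eq, pairing_apply, colSwap_apply, Fin.sum_univ_two,
      Fin.forall_fin_two, Equiv.swap_apply_left, Equiv.swap_apply_right, Pi.one_apply, one_mul]
    constructor <;> rintro ⟨h0, h1, hA, hB, hC, hD⟩ <;>
      exact ⟨by tauto, by linarith, by linarith, by linarith, by linarith, by linarith⟩
  ext q
  constructor
  · rintro ⟨p, hp, rfl⟩; exact (hmem p).2 hp
  · intro hq; exact ⟨colSwap q, (hmem _).1 (by rwa [hinv]), hinv q⟩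

lemma ncard_extremePoints_payoffDiffPolytope_swap (Y₁ Y₂ Z₁ Z₂ : ℝ) :
    (extremePoints ℝ (payoffDiffPolytope Y₂ Y₁ (-Z₁) (-Z₂))).ncard =
      (extremePoints ℝ (payoffDiffPolytope Y₁ Y₂ Z₁ Z₂)).ncard := by
  rw [← colSwap_image_payoffDiffPolytope, ← image_extremePoints,
    ncard_image_of_injective _ colSwap.injective]

lemma exists_pairing_ne_zero_of_finrank_eq_three {S : Set (Fin 2 → Fin 2 → ℝ)}
    (hS : ∀ p ∈ S, pairing 1 p = 1) (hdim : finrank ℝ (affineSpan ℝ S).direction = 3)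
    (c v : Fin 2 → Fin 2 → ℝ) (hv : pairing 1 v = 0) (hcv : pairing c v ≠ 0) :
    ∃ p ∈ S, pairing c p ≠ 0 := by
  by_contra! h
  have h4 : pairing (1 : Fin 2 → Fin 2 → ℝ) 1 ≠ 0 := by norm_num [Fin.sum_univ_two]
  have := finrank_direction_add_two_le _ _ hS h h4 hv hcv
  simp [hdim, Module.finrank_pi_fintype] at this

lemma opposite_signs_of_pos_of_neg {a b x y x' y' : ℝ} (ha : a ≠ 0) (hx : 0 ≤ x) (hy : 0 ≤ y)
    (hx' : 0 ≤ x') (hy' : 0 ≤ y') (hpos : 0 < a * x + b * y) (hneg : a * x' + b * y' < 0) :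
    (0 < a ∧ b < 0) ∨ (a < 0 ∧ 0 < b) := by
  rcases ha.lt_or_gt with ha | ha
  · exact Or.inr ⟨ha, by nlinarith⟩
  · exact Or.inl ⟨ha, by nlinarith⟩

theorem signs_of_finrank_eq_three {Y₁ Y₂ Z₁ Z₂ : ℝ} (hY₁ : Y₁ ≠ 0) (hZ₁ : Z₁ ≠ 0)
    (hdim : finrank ℝ (affineSpan ℝ (payoffDiffPolytope Y₁ Y₂ Z₁ Z₂)).direction = 3) :
    (0 < Y₁ ∧ Y₂ < 0 ∧ 0 < Z₁ ∧ Z₂ < 0) ∨ (Y₁ < 0 ∧ 0 < Y₂ ∧ Z₁ < 0 ∧ 0 < Z₂) := by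
  have slack := exists_pairing_ne_zero_of_finrank_eq_three (fun p hp => hp.2.1) hdim
  obtain ⟨p, ⟨hp, -, hpA, hpB, hpC, hpD⟩, hA⟩ :=
    slack ![![Y₁, Y₂], ![0, 0]] ![![1, 0], ![-1, 0]]
      (by simp [Fin.sum_univ_two]) (by simpa [Fin.sum_univ_two])
  obtain ⟨q, ⟨hq, -, -, hqB, -, -⟩, hB⟩ :=
    slack ![![0, 0], ![Y₁, Y₂]] ![![-1, 0], ![1, 0]]
      (by simp [Fin.sum_univ_two]) (by simpa [Fin.sum_univ_two])
  obtain ⟨r, ⟨hr, -, -, -, hrC, -⟩, hC⟩ :=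
    slack ![![Z₁, 0], ![Z₂, 0]] ![![1, -1], ![0, 0]]
      (by simp [Fin.sum_univ_two]) (by simpa [Fin.sum_univ_two])
  obtain ⟨s, ⟨hs, -, -, -, -, hsD⟩, hD⟩ :=
    slack ![![0, Z₁], ![0, Z₂]] ![![-1, 1], ![0, 0]]
      (by simp [Fin.sum_univ_two]) (by simpa [Fin.sum_univ_two])
  simp only [pairing_fin_two_apply, Matrix.cons_val_zero, Matrix.cons_val_one, zero_mul,
    zero_add, add_zero] at hA hB hC hD
  have hApos := hpA.lt_of_ne' hA
  have hY := opposite_signs_of_pos_of_neg hY₁ (hp 0 0) (hp 0 1) (hq 1 0) (hq 1 1) hApos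
    (hqB.lt_of_ne hB)
  have hZ := opposite_signs_of_pos_of_neg hZ₁ (hr 0 0) (hr 1 0) (hs 0 1) (hs 1 1)
    (hrC.lt_of_ne' hC) (hsD.lt_of_ne hD)
  have key : Z₁ * (Y₁ * p 0 0 + Y₂ * p 0 1) + Z₂ * (Y₁ * p 1 0 + Y₂ * p 1 1) =
      Y₁ * (Z₁ * p 0 0 + Z₂ * p 1 0) + Y₂ * (Z₁ * p 0 1 + Z₂ * p 1 1) := by ring
  rcases hY with ⟨hY₁, hY₂⟩ | ⟨hY₁, hY₂⟩ <;> rcases hZ with ⟨hZ₁, hZ₂⟩ | ⟨hZ₁, hZ₂⟩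
  · exact Or.inl ⟨hY₁, hY₂, hZ₁, hZ₂⟩
  · linarith [mul_neg_of_neg_of_pos hZ₁ hApos, mul_nonpos_of_nonneg_of_nonpos hZ₂.le hpB,
      mul_nonneg hY₁.le hpC, mul_nonneg_of_nonpos_of_nonpos hY₂.le hpD]
  · linarith [mul_pos hZ₁ hApos, mul_nonneg_of_nonpos_of_nonpos hZ₂.le hpB,
      mul_nonpos_of_nonpos_of_nonneg hY₁.le hpC, mul_nonpos_of_nonneg_of_nonpos hY₂.le hpD]
  · exact Or.inr ⟨hY₁, hY₂, hZ₁, hZ₂⟩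

lemma rayPoint_mem_payoffDiffPolytope {Y₁ Y₂ Z₁ Z₂ : ℝ} {r : Fin 2 → Fin 2 → ℝ}
    (hr : ∀ i j, 0 ≤ r i j) (hpos : 0 < pairing 1 r)
    (hA : 0 ≤ Y₁ * r 0 0 + Y₂ * r 0 1) (hB : Y₁ * r 1 0 + Y₂ * r 1 1 ≤ 0)
    (hC : 0 ≤ Z₁ * r 0 0 + Z₂ * r 1 0) (hD : Z₁ * r 0 1 + Z₂ * r 1 1 ≤ 0) :
    rayPoint (pairing 1) r ∈ payoffDiffPolytope Y₁ Y₂ Z₁ Z₂ := by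
  have hs : 0 ≤ (pairing 1 r)⁻¹ := by positivity
  simp only [payoffDiffPolytope, rayPoint, mem_ofPred_eq, map_smul, smul_eq_mul, Pi.smul_apply,
    inv_mul_cancel₀ hpos.ne', mul_left_comm _ (pairing 1 r)⁻¹, ← mul_add]
  exact ⟨fun i j => mul_nonneg hs (hr i j), trivial, mul_nonneg hs hA,
    mul_nonpos_of_nonneg_of_nonpos hs hB, mul_nonneg hs hC, mul_nonpos_of_nonneg_of_nonpos hs hD⟩

section Generic

-- `a, b, c, d` stand for `Y₁, -Y₂, Z₁, -Z₂` in the sign pattern `Y₁, Z₁ > 0 > Y₂, Z₂`.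

def pure00 : Fin 2 → Fin 2 → ℝ := ![![1, 0], ![0, 0]]
def pure11 : Fin 2 → Fin 2 → ℝ := ![![0, 0], ![0, 1]]

-- The mixed Nash equilibrium, up to scaling: the product of `![d, c]` and `![b, a]`.
def nashRay (a b c d : ℝ) : Fin 2 → Fin 2 → ℝ := ![![b * d, a * d], ![b * c, a * c]]
def zero01Ray (a b c d : ℝ) : Fin 2 → Fin 2 → ℝ := ![![b * d, 0], ![b * c, a * c]]
def zero10Ray (a b c d : ℝ) : Fin 2 → Fin 2 → ℝ := ![![b * d, a * d], ![0, a * c]]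

noncomputable def genericVertices (a b c d : ℝ) : Set (Fin 2 → Fin 2 → ℝ) :=
  {rayPoint (pairing 1) pure00, rayPoint (pairing 1) pure11, rayPoint (pairing 1) (nashRay a b c d),
    rayPoint (pairing 1) (zero01Ray a b c d), rayPoint (pairing 1) (zero10Ray a b c d)}

variable {a b c d : ℝ} (ha : 0 < a) (hb : 0 < b) (hc : 0 < c) (hd : 0 < d)
include ha hb hc hd

lemma pairing_one_rays_pos :
    0 < pairing 1 pure00 ∧ 0 < pairing 1 pure11 ∧ 0 < pairing 1 (nashRay a b c d) ∧
      0 < pairing 1 (zero01Ray a b c d) ∧ 0 < pairing 1 (zero10Ray a b c d) := by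
  simp only [pairing_fin_two_apply, Pi.one_apply, one_mul, pure00, pure11, nashRay, zero01Ray,
    zero10Ray, Matrix.cons_val_zero, Matrix.cons_val_one]
  refine ⟨by norm_num, by norm_num, by positivity, by positivity, by positivity⟩

lemma mem_convexHull_genericVertices {p r : Fin 2 → Fin 2 → ℝ} {w₁ w₂ w₃ w₄ : ℝ}
    (hp : pairing 1 p = 1) (hr : r = zero01Ray a b c d ∨ r = zero10Ray a b c d)
    (h₁ : 0 ≤ w₁) (h₂ : 0 ≤ w₂) (h₃ : 0 ≤ w₃) (h₄ : 0 ≤ w₄)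
    (h : (a * b * c * d) • p = w₁ • pure00 + w₂ • pure11 + w₃ • nashRay a b c d + w₄ • r) :
    p ∈ convexHull ℝ (genericVertices a b c d) := by
  obtain ⟨h00, h11, hN, hW, hW'⟩ := pairing_one_rays_pos ha hb hc hd
  refine mem_convexHull_of_smul_eq_sum (s := Finset.univ) (w := ![w₁, w₂, w₃, w₄])
    (r := ![pure00, pure11, nashRay a b c d, r]) (t := a * b * c * d) (by positivity) hp
    (fun i _ => ?_) (fun i _ => ?_) (fun i _ => ?_) (by simpa [Fin.sum_univ_four] using h)
  · fin_cases i <;> assumption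
  · rcases hr with rfl | rfl <;> fin_cases i <;> assumption
  · rcases hr with rfl | rfl <;> fin_cases i <;> simp [genericVertices]

-- Scaled by `abcd`, `p` is a nonnegative combination of the rays of the tetrahedron on its side
-- of the plane `a d p₁₀ = b c p₀₁`.
lemma payoffDiffPolytope_subset_convexHull :
    payoffDiffPolytope a (-b) c (-d) ⊆ convexHull ℝ (genericVertices a b c d) := by
  rintro p ⟨hp, hsum, hA, hB, hC, hD⟩
  have hp01 := hp 0 1; have hp10 := hp 1 0
  rcases le_total (b * c * p 0 1) (a * d * p 1 0) with h | h
  · refine mem_convexHull_genericVertices ha hb hc hd (w₁ := a * b * d * (c * p 0 0 - d * p 1 0))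
      (w₂ := a * c * d * (b * p 1 1 - a * p 1 0)) (w₃ := b * c * p 0 1)
      (w₄ := a * d * p 1 0 - b * c * p 0 1) hsum (.inl rfl)
      (mul_nonneg (by positivity) (by linarith)) (mul_nonneg (by positivity) (by linarith))
      (by positivity) (by linarith) ?_
    simp only [funext_iff, Fin.forall_fin_two, Pi.add_apply, Pi.smul_apply, smul_eq_mul, pure00,
      pure11, nashRay, zero01Ray, Matrix.cons_val_zero, Matrix.cons_val_one]
    refine ⟨⟨?_, ?_⟩, ?_, ?_⟩ <;> ring
  · refine mem_convexHull_genericVertices ha hb hc hd (w₁ := b * c * d * (a * p 0 0 - b * p 0 1))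
      (w₂ := a * b * c * (d * p 1 1 - c * p 0 1)) (w₃ := a * d * p 1 0)
      (w₄ := b * c * p 0 1 - a * d * p 1 0) hsum (.inr rfl)
      (mul_nonneg (by positivity) (by linarith)) (mul_nonneg (by positivity) (by linarith))
      (by positivity) (by linarith) ?_
    simp only [funext_iff, Fin.forall_fin_two, Pi.add_apply, Pi.smul_apply, smul_eq_mul, pure00,
      pure11, nashRay, zero10Ray, Matrix.cons_val_zero, Matrix.cons_val_one]
    refine ⟨⟨?_, ?_⟩, ?_, ?_⟩ <;> ring

lemma genericVertices_subset_payoffDiffPolytope :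
    genericVertices a b c d ⊆ payoffDiffPolytope a (-b) c (-d) := by
  obtain ⟨h00, h11, hN, hW, hW'⟩ := pairing_one_rays_pos ha hb hc hd
  simp only [genericVertices, insert_subset_iff, singleton_subset_iff]
  refine ⟨rayPoint_mem_payoffDiffPolytope ?_ h00 ?_ ?_ ?_ ?_,
    rayPoint_mem_payoffDiffPolytope ?_ h11 ?_ ?_ ?_ ?_,
    rayPoint_mem_payoffDiffPolytope ?_ hN ?_ ?_ ?_ ?_,
    rayPoint_mem_payoffDiffPolytope ?_ hW ?_ ?_ ?_ ?_,
    rayPoint_mem_payoffDiffPolytope ?_ hW' ?_ ?_ ?_ ?_⟩ <;>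
    simp only [pure00, pure11, nashRay, zero01Ray, zero10Ray, Fin.forall_fin_two,
      Matrix.cons_val_zero, Matrix.cons_val_one, mul_zero, mul_one, add_zero, zero_add, neg_mul] <;>
    first | positivity | (constructorm* _ ∧ _ <;> positivity) | (apply neg_nonpos.2; positivity) |
      linarith

lemma payoffDiffPolytope_eq_convexHull :
    payoffDiffPolytope a (-b) c (-d) = convexHull ℝ (genericVertices a b c d) :=
  (payoffDiffPolytope_subset_convexHull ha hb hc hd).antisymm
    (convexHull_min (genericVertices_subset_payoffDiffPolytope ha hb hc hd)
      (convex_payoffDiffPolytope ..))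

-- Each vertex is exposed by `pairing g`, where `g` sums the constraint forms and coordinates
-- that vanish at it.
lemma rayPoint_pure00_mem_extremePoints :
    rayPoint (pairing 1) pure00 ∈ extremePoints ℝ (payoffDiffPolytope a (-b) c (-d)) := by
  refine rayPoint_mem_extremePoints (g := pairing ![![0, 1], ![1, 1]])
    (genericVertices_subset_payoffDiffPolytope ha hb hc hd (by simp [genericVertices]))
    (fun y hy => hy.2.1) ?_ (by simp [pure00]) ?_
  · rintro y ⟨hy, -⟩
    simp only [pairing_fin_two_apply, Matrix.cons_val_zero, Matrix.cons_val_one]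
    linarith [hy 0 1, hy 1 0, hy 1 1]
  · rintro y ⟨hy, -⟩ hy0
    simp only [pairing_fin_two_apply, Matrix.cons_val_zero, Matrix.cons_val_one] at hy0
    refine ⟨1, y 0 0, one_ne_zero, ?_⟩
    simp only [funext_iff, Fin.forall_fin_two, Pi.smul_apply, smul_eq_mul, pure00,
      Matrix.cons_val_zero, Matrix.cons_val_one]
    refine ⟨⟨?_, ?_⟩, ?_, ?_⟩ <;> linarith [hy 0 1, hy 1 0, hy 1 1]

lemma rayPoint_pure11_mem_extremePoints :
    rayPoint (pairing 1) pure11 ∈ extremePoints ℝ (payoffDiffPolytope a (-b) c (-d)) := by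
  refine rayPoint_mem_extremePoints (g := pairing ![![1, 1], ![1, 0]])
    (genericVertices_subset_payoffDiffPolytope ha hb hc hd (by simp [genericVertices]))
    (fun y hy => hy.2.1) ?_ (by simp [pure11]) ?_
  · rintro y ⟨hy, -⟩
    simp only [pairing_fin_two_apply, Matrix.cons_val_zero, Matrix.cons_val_one]
    linarith [hy 0 0, hy 0 1, hy 1 0]
  · rintro y ⟨hy, -⟩ hy0
    simp only [pairing_fin_two_apply, Matrix.cons_val_zero, Matrix.cons_val_one] at hy0
    refine ⟨1, y 1 1, one_ne_zero, ?_⟩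
    simp only [funext_iff, Fin.forall_fin_two, Pi.smul_apply, smul_eq_mul, pure11,
      Matrix.cons_val_zero, Matrix.cons_val_one]
    refine ⟨⟨?_, ?_⟩, ?_, ?_⟩ <;> linarith [hy 0 0, hy 0 1, hy 1 0]

lemma rayPoint_nashRay_mem_extremePoints :
    rayPoint (pairing 1) (nashRay a b c d) ∈
      extremePoints ℝ (payoffDiffPolytope a (-b) c (-d)) := by
  refine rayPoint_mem_extremePoints (g := pairing ![![a + c, -(b + c)], ![-(a + d), b + d]])
    (genericVertices_subset_payoffDiffPolytope ha hb hc hd (by simp [genericVertices]))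
    (fun y hy => hy.2.1) ?_ (by
      simp only [nashRay, pairing_fin_two_apply, Matrix.cons_val_zero, Matrix.cons_val_one]
      ring) ?_
  · rintro y ⟨-, -, hA, hB, hC, hD⟩
    simp only [pairing_fin_two_apply, Matrix.cons_val_zero, Matrix.cons_val_one]
    linarith
  · rintro y ⟨-, -, hA, hB, hC, hD⟩ hy0
    simp only [pairing_fin_two_apply, Matrix.cons_val_zero, Matrix.cons_val_one] at hy0
    have hA' : a * y 0 0 = b * y 0 1 := by linarith
    have hB' : a * y 1 0 = b * y 1 1 := by linarith
    have hD' : c * y 0 1 = d * y 1 1 := by linarith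
    refine ⟨a * c, y 1 1, by positivity, ?_⟩
    simp only [funext_iff, Fin.forall_fin_two, Pi.smul_apply, smul_eq_mul, nashRay,
      Matrix.cons_val_zero, Matrix.cons_val_one]
    refine ⟨⟨?_, ?_⟩, ?_, ?_⟩
    · linear_combination c * hA' + b * hD'
    · linear_combination a * hD'
    · linear_combination c * hB'
    · ring

lemma rayPoint_zero01Ray_mem_extremePoints :
    rayPoint (pairing 1) (zero01Ray a b c d) ∈
      extremePoints ℝ (payoffDiffPolytope a (-b) c (-d)) := by
  refine rayPoint_mem_extremePoints (g := pairing ![![c, 1], ![-(a + d), b]])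
    (genericVertices_subset_payoffDiffPolytope ha hb hc hd (by simp [genericVertices]))
    (fun y hy => hy.2.1) ?_ (by
      simp only [zero01Ray, pairing_fin_two_apply, Matrix.cons_val_zero, Matrix.cons_val_one]
      ring) ?_
  · rintro y ⟨hy, -, -, hB, hC, -⟩
    simp only [pairing_fin_two_apply, Matrix.cons_val_zero, Matrix.cons_val_one]
    linarith [hy 0 1]
  · rintro y ⟨hy, -, -, hB, hC, -⟩ hy0
    simp only [pairing_fin_two_apply, Matrix.cons_val_zero, Matrix.cons_val_one] at hy0
    have h01 : y 0 1 = 0 := by linarith [hy 0 1]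
    have hB' : a * y 1 0 = b * y 1 1 := by linarith [hy 0 1]
    have hC' : c * y 0 0 = d * y 1 0 := by linarith [hy 0 1]
    refine ⟨a * c, y 1 1, by positivity, ?_⟩
    simp only [funext_iff, Fin.forall_fin_two, Pi.smul_apply, smul_eq_mul, zero01Ray,
      Matrix.cons_val_zero, Matrix.cons_val_one]
    refine ⟨⟨?_, ?_⟩, ?_, ?_⟩
    · linear_combination a * hC' + d * hB'
    · simp [h01]
    · linear_combination c * hB'
    · ring

lemma rayPoint_zero10Ray_mem_extremePoints :
    rayPoint (pairing 1) (zero10Ray a b c d) ∈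
      extremePoints ℝ (payoffDiffPolytope a (-b) c (-d)) := by
  refine rayPoint_mem_extremePoints (g := pairing ![![a, -(b + c)], ![1, d]])
    (genericVertices_subset_payoffDiffPolytope ha hb hc hd (by simp [genericVertices]))
    (fun y hy => hy.2.1) ?_ (by
      simp only [zero10Ray, pairing_fin_two_apply, Matrix.cons_val_zero, Matrix.cons_val_one]
      ring) ?_
  · rintro y ⟨hy, -, hA, -, -, hD⟩
    simp only [pairing_fin_two_apply, Matrix.cons_val_zero, Matrix.cons_val_one]
    linarith [hy 1 0]
  · rintro y ⟨hy, -, hA, -, -, hD⟩ hy0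
    simp only [pairing_fin_two_apply, Matrix.cons_val_zero, Matrix.cons_val_one] at hy0
    have h10 : y 1 0 = 0 := by linarith [hy 1 0]
    have hA' : a * y 0 0 = b * y 0 1 := by linarith [hy 1 0]
    have hD' : c * y 0 1 = d * y 1 1 := by linarith [hy 1 0]
    refine ⟨a * c, y 1 1, by positivity, ?_⟩
    simp only [funext_iff, Fin.forall_fin_two, Pi.smul_apply, smul_eq_mul, zero10Ray,
      Matrix.cons_val_zero, Matrix.cons_val_one]
    refine ⟨⟨?_, ?_⟩, ?_, ?_⟩
    · linear_combination c * hA' + b * hD'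
    · linear_combination a * hD'
    · simp [h10]
    · ring

theorem extremePoints_payoffDiffPolytope :
    extremePoints ℝ (payoffDiffPolytope a (-b) c (-d)) = genericVertices a b c d := by
  refine Subset.antisymm ?_ ?_
  · rw [payoffDiffPolytope_eq_convexHull ha hb hc hd]
    exact extremePoints_convexHull_subset
  · simp only [genericVertices, insert_subset_iff, singleton_subset_iff]
    exact ⟨rayPoint_pure00_mem_extremePoints ha hb hc hd,
      rayPoint_pure11_mem_extremePoints ha hb hc hd, rayPoint_nashRay_mem_extremePoints ha hb hc hd,
      rayPoint_zero01Ray_mem_extremePoints ha hb hc hd,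
      rayPoint_zero10Ray_mem_extremePoints ha hb hc hd⟩

theorem ncard_genericVertices : (genericVertices a b c d).ncard = 5 := by
  obtain ⟨-, h11, hN, hW, hW'⟩ := pairing_one_rays_pos ha hb hc hd
  rw [genericVertices, ncard_insert_of_notMem, ncard_insert_of_notMem, ncard_insert_of_notMem,
    ncard_pair]
  · exact rayPoint_ne_rayPoint_of_apply 0 1 rfl (mul_pos ha hd).ne' hW'.ne'
  all_goals simp only [mem_insert_iff, mem_singleton_iff, not_or]
  · exact ⟨(rayPoint_ne_rayPoint_of_apply 0 1 rfl (mul_pos ha hd).ne' hN.ne').symm,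
      (rayPoint_ne_rayPoint_of_apply 1 0 rfl (mul_pos hb hc).ne' hN.ne').symm⟩
  · exact ⟨rayPoint_ne_rayPoint_of_apply 0 0 rfl (mul_pos hb hd).ne' hN.ne',
      rayPoint_ne_rayPoint_of_apply 0 0 rfl (mul_pos hb hd).ne' hW.ne',
      rayPoint_ne_rayPoint_of_apply 0 0 rfl (mul_pos hb hd).ne' hW'.ne'⟩
  · exact ⟨rayPoint_ne_rayPoint_of_apply 1 1 rfl one_ne_zero h11.ne',
      rayPoint_ne_rayPoint_of_apply 1 1 rfl (mul_pos ha hc).ne' hN.ne',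
      rayPoint_ne_rayPoint_of_apply 1 1 rfl (mul_pos ha hc).ne' hW.ne',
      rayPoint_ne_rayPoint_of_apply 1 1 rfl (mul_pos ha hc).ne' hW'.ne'⟩

end Generic

theorem ncard_extremePoints_payoffDiffPolytope {Y₁ Y₂ Z₁ Z₂ : ℝ} (hY₁ : 0 < Y₁) (hY₂ : Y₂ < 0)
    (hZ₁ : 0 < Z₁) (hZ₂ : Z₂ < 0) :
    (extremePoints ℝ (payoffDiffPolytope Y₁ Y₂ Z₁ Z₂)).ncard = 5 := by
  have := extremePoints_payoffDiffPolytope hY₁ (neg_pos.2 hY₂) hZ₁ (neg_pos.2 hZ₂)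
  rw [neg_neg, neg_neg] at this
  rw [this, ncard_genericVertices hY₁ (neg_pos.2 hY₂) hZ₁ (neg_pos.2 hZ₂)]

theorem five_vertices_of_maximal_dim_2x2_general
    (X1 X2 : Fin 2 → Fin 2 → ℝ)
    (Y₁ Y₂ Z₁ Z₂ : ℝ)
    (hY₁ : Y₁ = X1 0 0 - X1 1 0) (hY₂ : Y₂ = X1 0 1 - X1 1 1)
    (hZ₁ : Z₁ = X2 0 0 - X2 0 1) (hZ₂ : Z₂ = X2 1 0 - X2 1 1)
    (hY₁0 : Y₁ ≠ 0) (hZ₁0 : Z₁ ≠ 0)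
    (hdim : Module.finrank ℝ (affineSpan ℝ (CorrelatedEqPolytope X1 X2)).direction = 3) :
    (Set.extremePoints ℝ (CorrelatedEqPolytope X1 X2)).ncard = 5 := by
  rw [correlatedEqPolytope_eq_payoffDiffPolytope, ← hY₁, ← hY₂, ← hZ₁, ← hZ₂] at hdim ⊢
  rcases signs_of_finrank_eq_three hY₁0 hZ₁0 hdim with ⟨hY₁, hY₂, hZ₁, hZ₂⟩ | ⟨hY₁, hY₂, hZ₁, hZ₂⟩
  · exact ncard_extremePoints_payoffDiffPolytope hY₁ hY₂ hZ₁ hZ₂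
  · rw [← ncard_extremePoints_payoffDiffPolytope_swap]
    exact ncard_extremePoints_payoffDiffPolytope hY₂ hY₁ (neg_pos.2 hZ₁) (neg_neg_iff_pos.2 hZ₂)

/-- For a generic `(2 × 2)`-game, if the correlated equilibrium polytope has maximal
dimension `3` then it has exactly `5` vertices. -/
theorem five_vertices_of_maximal_dim_2x2
    (X1 X2 : Fin 2 → Fin 2 → ℝ)
    (Y₁ Y₂ Z₁ Z₂ : ℝ)
    (hY₁ : Y₁ = X1 0 0 - X1 1 0) (hY₂ : Y₂ = X1 0 1 - X1 1 1)
    (hZ₁ : Z₁ = X2 0 0 - X2 0 1) (hZ₂ : Z₂ = X2 1 0 - X2 1 1)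
    (hY₁0 : Y₁ ≠ 0) (hY₂0 : Y₂ ≠ 0) (hZ₁0 : Z₁ ≠ 0) (hZ₂0 : Z₂ ≠ 0)
    (hdim : Module.finrank ℝ (affineSpan ℝ (CorrelatedEqPolytope X1 X2)).direction = 3) :
    (Set.extremePoints ℝ (CorrelatedEqPolytope X1 X2)).ncard = 5 :=
  five_vertices_of_maximal_dim_2x2_general X1 X2 Y₁ Y₂ Z₁ Z₂ hY₁ hY₂ hZ₁ hZ₂ hY₁0 hZ₁0 hdim
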